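/- arXiv:2602.18390 — 4 statements merged into one kernel-verified Lean document; each statement's English description precedes it below -/
import Mathlib

section
/- Let K be a commutative monoid that is weakly cancellative and whose natural order is total (for all a, b ∈ K, a ≤ b or b ≤ a). Then differences are unique: for all a, b, c, c' ∈ K, if b + c = a and b + c' = a, then c = c'. -/
/-- The natural order on an additive commutative monoid. -/
def natLE {K : Type*} [AddCommMonoid K] (a b : K) : Prop :=
  ∃ c, a + c = b

/-- In a weakly cancellative commutative monoid whose natural
order is total, differences are unique. -/
theorem differences_unique
    (K : Type*) [AddCommMonoid K]
    (hwc : ∀ a b : K, a + b = b → a = 0)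
    (htot : ∀ a b : K, natLE a b ∨ natLE b a) :
    ∀ a b c c' : K, b + c = a → b + c' = a → c = c' := by
  have key : ∀ c c' b : K, natLE c c' → b + c = b + c' → c = c' := by
    rintro c c' b ⟨d, hd⟩ h
    have : d + (b + c) = b + c := by
      conv_rhs => rw [h, ← hd]
      abel
    have hd0 := hwc d (b + c) this
    rw [← hd, hd0, add_zero]
  intro a b c c' h1 h2
  rcases htot c c' with hle | hle
  · exact key c c' b hle (h1.trans h2.symm)
  · exact (key c' c b hle (h2.trans h1.symm)).symm
end

section
/- Let K be a positive weakly cancellative commutative monoid, ι a type, and f, g : ι →₀ K finitely supported functions. Suppose f i ≤ g i in the natural order of K for all i ∈ ι, and suppose the total sum of g is ≤ the total sum of f (i.e., g.sum ≤ f.sum in the natural order). Then g i ≤ f i for all i ∈ ι. -/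
private lemma aux_sum_zero {K : Type*} [AddCommMonoid K] {ι : Type*}
    (hpos : ∀ a b : K, a + b = 0 → a = 0 ∧ b = 0)
    (t : Finset ι) (c : ι → K) (h : (∑ i ∈ t, c i) = 0) :
    ∀ i ∈ t, c i = 0 := by
  induction t using Finset.cons_induction with
  | empty => intro i hi; exact absurd hi (Finset.notMem_empty i)
  | cons a t ha ih =>
    rw [Finset.sum_cons] at h
    obtain ⟨h1, h2⟩ := hpos _ _ h
    intro i hi
    rcases Finset.mem_cons.mp hi with rfl | hi
    · exact h1
    · exact ih h2 i hi

/-- Soundness of weak symmetry: over a positive weakly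
cancellative commutative monoid, if f ≤ g pointwise and the total sum of g
is ≤ the total sum of f, then g ≤ f pointwise. -/
theorem weak_symmetry_sound
    (K : Type*) [AddCommMonoid K]
    (hpos : ∀ a b : K, a + b = 0 → a = 0 ∧ b = 0)
    (hwc : ∀ a b : K, a + b = b → a = 0)
    (ι : Type*) (f g : ι →₀ K)
    (hle : ∀ i : ι, natLE (f i) (g i))
    (hsum : natLE (g.sum fun _ x => x) (f.sum fun _ x => x)) :
    ∀ i : ι, natLE (g i) (f i) := by
  classical
  choose c hc using hle
  set s : Finset ι := f.support ∪ g.support with hs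
  have hfs : (f.sum fun _ x => x) = ∑ i ∈ s, f i :=
    Finsupp.sum_of_support_subset f (Finset.subset_union_left) _ (fun _ _ => rfl)
  have hgs : (g.sum fun _ x => x) = ∑ i ∈ s, g i :=
    Finsupp.sum_of_support_subset g (Finset.subset_union_right) _ (fun _ _ => rfl)
  have hsplit : ∑ i ∈ s, g i = (∑ i ∈ s, f i) + ∑ i ∈ s, c i := by
    rw [← Finset.sum_add_distrib]
    exact Finset.sum_congr rfl (fun i _ => (hc i).symm)
  obtain ⟨d, hd⟩ := hsum
  rw [hfs, hgs, hsplit] at hd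
  have hzero : (∑ i ∈ s, c i) + d = 0 := by
    apply hwc
    rw [add_comm]
    rw [add_assoc] at hd
    exact hd
  have hcsum : (∑ i ∈ s, c i) = 0 := (hpos _ _ hzero).1
  have hci : ∀ i ∈ s, c i = 0 := aux_sum_zero hpos s c hcsum
  intro i
  by_cases hi : i ∈ s
  · have : g i = f i := by rw [← hc i, hci i hi, add_zero]
    exact ⟨0, by rw [add_zero, this]⟩
  · have hf : f i = 0 := Finsupp.notMem_support_iff.mp
      (fun h => hi (Finset.mem_union_left _ h))
    have hg : g i = 0 := Finsupp.notMem_support_iff.mp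
      (fun h => hi (Finset.mem_union_right _ h))
    exact ⟨0, by rw [add_zero, hf, hg]⟩
end

section
/- Let K be a positive commutative monoid that is weakly absorptive. Then there exist finitely supported functions f, g : Bool →₀ K such that f i ≤ g i in the natural order of K for all i, the total sums are equal (f.sum = g.sum), and yet it is not the case that g i ≤ f i for all i. (Hence the weak symmetry rule for inclusion dependencies is not sound over balanced K-databases.) -/
/-- Over a positive weakly absorptive commutative monoid, weak
symmetry fails even for balanced K-relations: there are f, g with f ≤ g
pointwise and equal total sums, yet not g ≤ f pointwise. -/
theorem weak_symmetry_unsound_of_weakly_absorptive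
    (K : Type*) [AddCommMonoid K]
    (hpos : ∀ a b : K, a + b = 0 → a = 0 ∧ b = 0)
    (hwa : ∃ a b : K, a ≠ 0 ∧ b ≠ 0 ∧ a + b = b) :
    ∃ f g : Bool →₀ K,
      (∀ i : Bool, natLE (f i) (g i)) ∧
      (f.sum fun _ x => x) = (g.sum fun _ x => x) ∧
      ¬ (∀ i : Bool, natLE (g i) (f i)) := by
  obtain ⟨a, b, ha, hb, hab⟩ := hwa
  refine ⟨Finsupp.single true b, Finsupp.single false a + Finsupp.single true b, ?_, ?_, ?_⟩
  · intro i
    cases i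
    · exact ⟨a, by simp⟩
    · exact ⟨0, by simp⟩
  · rw [Finsupp.sum_add_index' (fun _ => rfl) (fun _ _ _ => rfl),
      Finsupp.sum_single_index rfl, Finsupp.sum_single_index (M := K) rfl]
    exact hab.symm
  · intro h
    obtain ⟨c, hc⟩ := h false
    simp at hc
    exact ha (hpos a c hc).1
end

section
/- Let K be a positive commutative monoid that is weakly absorptive but not countably absorptive. Then there exist nonzero elements a, b ∈ K such that a + b = b, and such that b + c ≠ c for every c ∈ K. -/
/-- In a positive commutative monoid that is weakly absorptive
but not countably absorptive, there are nonzero a, b with a + b = b and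
b + c ≠ c for every c. -/
theorem wa_not_ca_elements
    (K : Type*) [AddCommMonoid K]
    (hpos : ∀ a b : K, a + b = 0 → a = 0 ∧ b = 0)
    (hwa : ∃ a b : K, a ≠ 0 ∧ b ≠ 0 ∧ a + b = b)
    (hnca : ¬ ∃ a : ℕ → K, a 0 ≠ 0 ∧ ∀ i : ℕ, a i + a (i + 1) = a (i + 1)) :
    ∃ a b : K, a ≠ 0 ∧ b ≠ 0 ∧ a + b = b ∧ ∀ c : K, b + c ≠ c := by
  by_contra hcon
  push_neg at hcon
  -- hcon : ∀ a b, a ≠ 0 → b ≠ 0 → a + b = b → ∃ c, b + c = c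
  obtain ⟨a0, b0, ha0, hb0, hab0⟩ := hwa
  set S := {p : K × K // p.1 ≠ 0 ∧ p.2 ≠ 0 ∧ p.1 + p.2 = p.2} with hS
  -- need the property of step, so rebuild with choice explicitly
  have hstep : ∀ p : S, ∃ q : S, q.1.1 = p.1.2 := by
    rintro ⟨⟨a, b⟩, ha, hb, hab⟩
    obtain ⟨c, hc⟩ := hcon a b ha hb hab
    have hc0 : c ≠ 0 := by
      intro hc0
      apply hb
      rw [hc0, add_zero] at hc
      exact hc
    exact ⟨⟨(b, c), hb, hc0, hc⟩, rfl⟩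
  choose f hf using hstep
  let p0 : S := ⟨(a0, b0), ha0, hb0, hab0⟩
  let g : ℕ → S := fun n => f^[n] p0
  refine hnca ⟨fun n => (g n).1.1, ha0, ?_⟩
  intro i
  have h1 : g (i + 1) = f (g i) := Function.iterate_succ_apply' f i p0
  have h2 : (g (i + 1)).1.1 = (g i).1.2 := by rw [h1]; exact hf (g i)
  show (g i).1.1 + (g (i+1)).1.1 = (g (i+1)).1.1
  rw [h2]
  exact (g i).2.2.2
end
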